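/- Let Y₁,…,Yₙ be i.i.d. Bernoulli(τ) with τ ∈ (0,1), fix x ∈ (−1,1), and let u_x ∈ (0,1) be the unique solution of (τ−u)/√(τ² + u(1−2τ)) = x. Define Tₙ = Σᵢ(τ−Yᵢ)/√(Σᵢ(τ−Yᵢ)² ) on the event {0 < Σᵢ Yᵢ < n}. Then on that event, P(Tₙ ≥ √n·x and 0 < ΣᵢYᵢ < n) = P(ΣᵢYᵢ ≤ n·u_x and 0 < ΣᵢYᵢ < n); i.e., the upper-tail event of the self-normalized statistic equals a lower-tail binomial event. -/

import Mathlib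

private lemma q_pos {τ u : ℝ} (hτ : τ ∈ Set.Ioo (0:ℝ) 1) (hu : u ∈ Set.Ioo (0:ℝ) 1) :
    0 < τ^2 + u * (1 - 2*τ) := by
  obtain ⟨h1, h2⟩ := hτ; obtain ⟨h3, h4⟩ := hu
  nlinarith [mul_pos (show (0:ℝ) < 1-u by linarith) (pow_pos h1 2),
    mul_nonneg h3.le (sq_nonneg (1-τ))]

private lemma g_strictAnti {τ : ℝ} (hτ : τ ∈ Set.Ioo (0:ℝ) 1) :
    StrictAntiOn (fun u => (τ - u) / Real.sqrt (τ^2 + u * (1 - 2*τ))) (Set.Ioo (0:ℝ) 1) := by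
  intro u hu v hv huv
  simp only
  have hqu := q_pos hτ hu
  have hqv := q_pos hτ hv
  have ha : 0 < Real.sqrt (τ^2 + u * (1 - 2*τ)) := Real.sqrt_pos.2 hqu
  have hb : 0 < Real.sqrt (τ^2 + v * (1 - 2*τ)) := Real.sqrt_pos.2 hqv
  set a := Real.sqrt (τ^2 + u * (1 - 2*τ)) with hadef
  set b := Real.sqrt (τ^2 + v * (1 - 2*τ)) with hbdef
  clear_value a b
  have ha2 : a^2 = τ^2 + u * (1 - 2*τ) := hadef ▸ Real.sq_sqrt hqu.le
  have hb2 : b^2 = τ^2 + v * (1 - 2*τ)  := hbdef ▸ Real.sq_sqrt hqv.le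
  rw [div_lt_div_iff₀ hb ha]
  obtain ⟨hτ0, hτ1⟩ := hτ
  obtain ⟨hu0, hu1⟩ := hu
  obtain ⟨hv0, hv1⟩ := hv
  have key : ((τ-u)*b)^2 - ((τ-v)*a)^2
      = (v-u)*(τ^2*(1-u)*(1-v) - u*v*(1-τ)^2) := by
    rw [mul_pow, mul_pow, ha2, hb2]; ring
  rcases le_or_gt v τ with hvτ | hvτ
  · -- u < v ≤ τ : both numerators ≥ 0
    have h1 : u*v < τ^2 := by nlinarith
    have h2 : (1-τ)^2 ≤ (1-u)*(1-v) := by nlinarith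
    have hR : 0 < τ^2*(1-u)*(1-v) - u*v*(1-τ)^2 := by
      nlinarith [mul_nonneg (sq_nonneg τ) (sub_nonneg.2 h2),
        mul_pos (sub_pos.2 h1) (pow_pos (show (0:ℝ) < 1-τ by linarith) 2)]
    have hsq : ((τ-v)*a)^2 < ((τ-u)*b)^2 := by linarith [key, mul_pos (sub_pos.2 huv) hR]
    have hA : 0 < (τ-u)*b := mul_pos (by linarith) hb
    exact lt_of_pow_lt_pow_left₀ 2 hA.le hsq
  · rcases lt_or_ge u τ with huτ | huτ
    · -- u < τ < v : signs differ
      have hA : 0 < (τ-u)*b := mul_pos (by linarith) hb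
      have hB : (τ-v)*a < 0 := mul_neg_of_neg_of_pos (by linarith) ha
      linarith
    · -- τ ≤ u < v
      have h1 : τ^2 < u*v := by nlinarith
      have h2 : (1-u)*(1-v) < (1-τ)^2 := by nlinarith
      have hR : τ^2*(1-u)*(1-v) - u*v*(1-τ)^2 < 0 := by
        have e1 : τ^2*((1-u)*(1-v)) < τ^2*(1-τ)^2 :=
          mul_lt_mul_of_pos_left h2 (pow_pos hτ0 2)
        have e2 : τ^2*(1-τ)^2 ≤ u*v*(1-τ)^2 :=
          mul_le_mul_of_nonneg_right h1.le (sq_nonneg (1-τ))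
        linarith [e1, e2]
      have hsq : ((u-τ)*b)^2 < ((v-τ)*a)^2 := by
        have hm : 0 < (v-u)*(-(τ^2*(1-u)*(1-v) - u*v*(1-τ)^2)) :=
          mul_pos (sub_pos.2 huv) (by linarith)
        linarith [key, hm]
      have hB : 0 < (v-τ)*a := mul_pos (by linarith) ha
      have hA : 0 ≤ (u-τ)*b := mul_nonneg (by linarith) hb.le
      have := lt_of_pow_lt_pow_left₀ 2 hB.le hsq
      linarith

open MeasureTheory Finset in
theorem binomial_reduction_probability
    {Ω : Type*} [MeasurableSpace Ω] (μ : Measure Ω) [IsProbabilityMeasure μ]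
    (n : ℕ) (hn : 1 ≤ n) (τ : ℝ) (hτ : τ ∈ Set.Ioo (0:ℝ) 1)
    (Y : Fin n → Ω → ℝ)
    (hmeas : ∀ i, Measurable (Y i))
    (hval : ∀ i ω, Y i ω = 0 ∨ Y i ω = 1)
    (hbern : ∀ i, μ {ω | Y i ω = 1} = ENNReal.ofReal τ)
    (hindep : ProbabilityTheory.iIndepFun Y μ)
    (x : ℝ) (hx : x ∈ Set.Ioo (-1 : ℝ) 1)
    (ux : ℝ) (hux : ux ∈ Set.Ioo (0:ℝ) 1)
    (hux_eq : (τ - ux) / Real.sqrt (τ^2 + ux * (1 - 2*τ)) = x) :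
    μ {ω | Real.sqrt n * x ≤ (∑ i, (τ - Y i ω)) / Real.sqrt (∑ i, (τ - Y i ω)^2)
          ∧ 0 < ∑ i, Y i ω ∧ ∑ i, Y i ω < n}
      = μ {ω | (∑ i, Y i ω) ≤ n * ux ∧ 0 < ∑ i, Y i ω ∧ ∑ i, Y i ω < n} := by
  have hn0 : (0:ℝ) < n := by exact_mod_cast hn
  refine congrArg μ (Set.ext fun ω => ?_)
  simp only [Set.mem_setOf_eq]
  refine and_congr_left fun hP => ?_
  obtain ⟨hpos, hlt⟩ := hP
  set S := ∑ i, Y i ω with hSdef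
  -- sums in terms of S
  have hs1 : ∑ i, (τ - Y i ω) = n * τ - S := by
    rw [Finset.sum_sub_distrib, Finset.sum_const, Finset.card_univ, Fintype.card_fin,
      nsmul_eq_mul]
  have hs2 : ∑ i, (τ - Y i ω)^2 = n * τ^2 + (1 - 2*τ) * S := by
    have h : ∀ i ∈ Finset.univ, (τ - Y i ω)^2 = τ^2 + (1 - 2*τ) * (Y i ω) := by
      intro i _
      rcases hval i ω with h | h <;> rw [h] <;> ring
    rw [Finset.sum_congr rfl h, Finset.sum_add_distrib, ← Finset.mul_sum,
      Finset.sum_const, Finset.card_univ, Fintype.card_fin, nsmul_eq_mul, ← hSdef]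
  set u := S / n with hudef
  have hu : u ∈ Set.Ioo (0:ℝ) 1 := ⟨div_pos hpos hn0, (div_lt_one hn0).2 hlt⟩
  have hS : S = n * u := by rw [hudef]; field_simp
  have hQ : 0 < τ^2 + u * (1 - 2*τ) := q_pos hτ hu
  have hsn : 0 < Real.sqrt n := Real.sqrt_pos.2 hn0
  have hden : Real.sqrt (∑ i, (τ - Y i ω)^2)
      = Real.sqrt n * Real.sqrt (τ^2 + u * (1 - 2*τ)) := by
    rw [hs2, hS, show (n:ℝ) * τ^2 + (1 - 2*τ) * ((n:ℝ) * u)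
        = (n:ℝ) * (τ^2 + u * (1 - 2*τ)) by ring, Real.sqrt_mul hn0.le]
  have hnum : ∑ i, (τ - Y i ω) = (n:ℝ) * (τ - u) := by rw [hs1, hS]; ring
  have hfrac : (∑ i, (τ - Y i ω)) / Real.sqrt (∑ i, (τ - Y i ω)^2)
      = Real.sqrt n * ((τ - u) / Real.sqrt (τ^2 + u * (1 - 2*τ))) := by
    rw [hnum, hden,
      show (n:ℝ) * (τ - u) = Real.sqrt n * (Real.sqrt n * (τ - u)) by
        linear_combination (u - τ) * Real.mul_self_sqrt hn0.le,
      mul_div_mul_left _ _ hsn.ne', mul_div_assoc]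
  rw [hfrac, mul_le_mul_iff_right₀ hsn, ← hux_eq,
    (g_strictAnti hτ).le_iff_ge hux hu, hS]
  constructor
  · intro h; exact mul_le_mul_of_nonneg_left h hn0.le
  · intro h; exact le_of_mul_le_mul_left h hn0
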